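/- arXiv:1309.3113 — 2 statements merged into one kernel-verified Lean document; each statement's English description precedes it below -/
import Mathlib

section
/- Let e : L → C be a canonical extension of a bounded lattice L, let T ⊆ L be finite and b ∈ L. The following are equivalent: (i) b ∈ ⟨T⟩_ai; (ii) b̂ ⊆ ⋃_{a∈T} â, where ĉ := {x ∈ J∞(C) : x ≤ e(c)}; (iii) there exists a finite join-admissible M ⊆ L with every element of M below some element of T and b = ⋁M. -/
/-- A finite subset `M` of a bounded lattice is join-admissible if its join
distributes over all meets with elements of the lattice. -/
def JoinAdmissible {L : Type*} [Lattice L] [BoundedOrder L] (M : Finset L) : Prop :=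
  ∀ a : L, a ⊓ M.sup id = M.sup fun m => a ⊓ m

/-- An a-ideal: a downward-closed subset closed under admissible joins. -/
def IsAIdeal {L : Type*} [Lattice L] [BoundedOrder L] (A : Set L) : Prop :=
  (∀ a ∈ A, ∀ b, b ≤ a → b ∈ A) ∧
  ∀ M : Finset L, ↑M ⊆ A → JoinAdmissible M → M.sup id ∈ A

/-- The smallest a-ideal containing `T`. -/
def aIdealGen {L : Type*} [Lattice L] [BoundedOrder L] (T : Set L) : Set L :=
  ⋂₀ {A : Set L | IsAIdeal A ∧ T ⊆ A}

/-- An element `x` of a complete lattice is completely join-irreducible if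
`x ∈ S` whenever `x = ⨆ S`. -/
def CompletelyJoinIrreducible {C : Type*} [CompleteLattice C] (x : C) : Prop :=
  ∀ S : Set C, x = sSup S → x ∈ S

/-- An element `y` of a complete lattice is completely meet-irreducible if
`y ∈ S` whenever `y = ⨅ S`. -/
def CompletelyMeetIrreducible {C : Type*} [CompleteLattice C] (y : C) : Prop :=
  ∀ S : Set C, y = sInf S → y ∈ S

/-- `e : L → C` is a canonical extension of the bounded lattice `L`: an injective
bounded-lattice homomorphism into a complete lattice `C` which is dense and compact. -/
def IsCanonicalExtension {L C : Type*} [Lattice L] [BoundedOrder L] [CompleteLattice C]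
    (e : L → C) : Prop :=
  Function.Injective e ∧
  (∀ a b : L, e (a ⊓ b) = e a ⊓ e b) ∧
  (∀ a b : L, e (a ⊔ b) = e a ⊔ e b) ∧
  e ⊥ = ⊥ ∧ e ⊤ = ⊤ ∧
  -- denseness
  (∀ u : C,
    u = sSup {v : C | ∃ S : Set L, v = sInf (e '' S) ∧ v ≤ u} ∧
    u = sInf {v : C | ∃ T : Set L, v = sSup (e '' T) ∧ u ≤ v}) ∧
  -- compactness
  (∀ S T : Set L, sInf (e '' S) ≤ sSup (e '' T) →
    ∃ S' T' : Finset L, ↑S' ⊆ S ∧ ↑T' ⊆ T ∧ S'.inf id ≤ T'.sup id)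

/-- `â`: the set of completely join-irreducible elements of `C` below `e a`. -/
def hatSet {L C : Type*} [Lattice L] [BoundedOrder L] [CompleteLattice C]
    (e : L → C) (a : L) : Set C :=
  {x : C | CompletelyJoinIrreducible x ∧ x ≤ e a}


/-!
Two facts about a canonical extension `e : L → C` carry the argument. First, a completely
join-irreducible `x` is join-prime for admissible joins: `x` is the meet of the images of the
filter `{a | x ≤ e a}`, so by compactness `x ≤ e (⋁ M)` is witnessed by some `a` in that filter
with `a ⊓ ⋁ M` below a finite join, and admissibility distributes `a` over `M`. Second,
completely join-irreducibles separate the order of `C`: a Zorn-maximal set `A ⊇ S₀` whose image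
meet stays off a given open element has a completely join-irreducible image meet.
Hence `b̂ ⊆ ⋃ â` says exactly that every `c ≤ b` lies below `⋁_{a ∈ T} (c ⊓ a)`, i.e. that
`{b ⊓ a | a ∈ T}` is an admissible decomposition of `b`; and the admissible joins of elements
below `T` already form an a-ideal.
-/

namespace IsCanonicalExtension

variable {L C : Type*} [Lattice L] [BoundedOrder L] [CompleteLattice C] {e : L → C}

def toBoundedLatticeHom (h : IsCanonicalExtension e) : BoundedLatticeHom L C where
  toFun := e
  map_sup' := h.2.2.1
  map_inf' := h.2.1
  map_top' := h.2.2.2.2.1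
  map_bot' := h.2.2.2.1

lemma monotone (h : IsCanonicalExtension e) : Monotone e :=
  OrderHomClass.mono h.toBoundedLatticeHom

lemma map_finset_sup (h : IsCanonicalExtension e) {ι : Type*} (s : Finset ι) (f : ι → L) :
    e (s.sup f) = s.sup (e ∘ f) :=
  _root_.map_finset_sup h.toBoundedLatticeHom s f

lemma map_finset_inf (h : IsCanonicalExtension e) {ι : Type*} (s : Finset ι) (f : ι → L) :
    e (s.inf f) = s.inf (e ∘ f) :=
  _root_.map_finset_inf h.toBoundedLatticeHom s f

lemma map_le_map_iff (h : IsCanonicalExtension e) {a b : L} : e a ≤ e b ↔ a ≤ b := by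
  refine ⟨fun hab => ?_, fun hab => h.monotone hab⟩
  rw [← inf_eq_left, ← h.1.eq_iff, h.2.1]
  exact inf_eq_left.mpr hab

lemma map_finset_sup_le_sSup_image (h : IsCanonicalExtension e) {T : Set L} {T' : Finset L}
    (hT' : ↑T' ⊆ T) : e (T'.sup id) ≤ sSup (e '' T) := by
  rw [h.map_finset_sup]
  exact Finset.sup_le fun t ht => le_sSup ⟨t, hT' ht, rfl⟩

lemma sInf_image_le_map_finset_inf (h : IsCanonicalExtension e) {S : Set L} {S' : Finset L}
    (hS' : ↑S' ⊆ S) : sInf (e '' S) ≤ e (S'.inf id) := by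
  rw [h.map_finset_inf]
  exact Finset.le_inf fun s hs => sInf_le ⟨s, hS' hs, rfl⟩

lemma sInf_image_le_sSup_image_iff (h : IsCanonicalExtension e) {S T : Set L} :
    sInf (e '' S) ≤ sSup (e '' T) ↔
      ∃ S' T' : Finset L, ↑S' ⊆ S ∧ ↑T' ⊆ T ∧ S'.inf id ≤ T'.sup id := by
  refine ⟨h.2.2.2.2.2.2 S T, fun ⟨S', T', hS', hT', hST⟩ => ?_⟩
  exact (h.sInf_image_le_map_finset_inf hS').trans
    ((h.monotone hST).trans (h.map_finset_sup_le_sSup_image hT'))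

lemma le_of_forall_sInf_image_le (h : IsCanonicalExtension e) {u v : C}
    (huv : ∀ S : Set L, sInf (e '' S) ≤ u → sInf (e '' S) ≤ v) : u ≤ v := by
  rw [(h.2.2.2.2.2.1 u).1]
  exact sSup_le fun w ⟨S, hw, hwu⟩ => hw ▸ huv S (hw ▸ hwu)

lemma le_of_forall_le_sSup_image (h : IsCanonicalExtension e) {u v : C}
    (huv : ∀ T : Set L, v ≤ sSup (e '' T) → u ≤ sSup (e '' T)) : u ≤ v := by
  rw [(h.2.2.2.2.2.1 v).2]
  exact le_sInf fun w ⟨T, hw, hvw⟩ => hw ▸ huv T (hw ▸ hvw)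

lemma eq_sInf_image_of_completelyJoinIrreducible (h : IsCanonicalExtension e) {x : C}
    (hx : CompletelyJoinIrreducible x) : x = sInf (e '' {a | x ≤ e a}) := by
  obtain ⟨S, hS, -⟩ := hx _ (h.2.2.2.2.2.1 x).1
  refine le_antisymm (le_sInf fun _ ⟨a, ha, hax⟩ => hax ▸ ha) ?_
  calc sInf (e '' {a | x ≤ e a}) ≤ sInf (e '' S) :=
        sInf_le_sInf (Set.image_mono fun a ha => hS.le.trans (sInf_le ⟨a, ha, rfl⟩))
    _ = x := hS.symm

lemma exists_le_map_and_inf_le_of_inf_le_sSup (h : IsCanonicalExtension e) {x : C}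
    (hx : CompletelyJoinIrreducible x) {m : L} {I : Set L} (hm : x ⊓ e m ≤ sSup (e '' I)) :
    ∃ a, x ≤ e a ∧ ∃ I' : Finset L, ↑I' ⊆ I ∧ a ⊓ m ≤ I'.sup id := by
  classical
  have hx' := h.eq_sInf_image_of_completelyJoinIrreducible hx
  obtain ⟨S', I', hS', hI', hSI⟩ : ∃ S' I' : Finset L,
      ↑S' ⊆ insert m {a | x ≤ e a} ∧ ↑I' ⊆ I ∧ S'.inf id ≤ I'.sup id := by
    rwa [← h.sInf_image_le_sSup_image_iff, Set.image_insert_eq, sInf_insert, ← hx', inf_comm]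
  have hS'm : ↑(S'.erase m) ⊆ {a | x ≤ e a} := fun s hs =>
    (hS' (Finset.mem_of_mem_erase hs)).resolve_left (Finset.ne_of_mem_erase hs)
  refine ⟨(S'.erase m).inf id, hx'.le.trans (h.sInf_image_le_map_finset_inf hS'm), I', hI', ?_⟩
  calc (S'.erase m).inf id ⊓ m = (insert m (S'.erase m)).inf id := by
        rw [Finset.inf_insert, inf_comm, id]
    _ ≤ S'.inf id := Finset.inf_mono (Finset.insert_erase_subset m S')
    _ ≤ I'.sup id := hSI

theorem exists_le_of_le_map_sup (h : IsCanonicalExtension e) {M : Finset L}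
    (hM : JoinAdmissible M) {x : C} (hx : CompletelyJoinIrreducible x)
    (hxM : x ≤ e (M.sup id)) : ∃ m ∈ M, x ≤ e m := by
  classical
  suffices hxy : x ≤ sSup ((fun m => x ⊓ e m) '' M) by
    obtain ⟨m, hm, hxm⟩ :=
      hx _ (le_antisymm hxy (sSup_le (Set.forall_mem_image.2 fun _ _ => inf_le_left)))
    exact ⟨m, hm, hxm ▸ inf_le_right⟩
  refine h.le_of_forall_le_sSup_image fun I hI => ?_
  have hmI : ∀ m ∈ M, x ⊓ e m ≤ sSup (e '' I) := fun m hm =>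
    (le_sSup (Set.mem_image_of_mem (fun m => x ⊓ e m) hm)).trans hI
  choose! a hxa I' hI' haI' using
    fun m hm => h.exists_le_map_and_inf_le_of_inf_le_sSup hx (hmI m hm)
  have hxMa : x ≤ e (M.inf a) := h.map_finset_inf M a ▸ Finset.le_inf hxa
  have hadm : M.inf a ⊓ M.sup id ≤ (M.biUnion I').sup id := by
    rw [hM]
    exact Finset.sup_le fun m hm => (inf_le_inf_right m (Finset.inf_le hm)).trans
      ((haI' m hm).trans (Finset.sup_mono (Finset.subset_biUnion_of_mem I' hm)))
  calc x ≤ e (M.inf a ⊓ M.sup id) := by rw [h.2.1]; exact le_inf hxMa hxM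
    _ ≤ e ((M.biUnion I').sup id) := h.monotone hadm
    _ ≤ sSup (e '' I) := h.map_finset_sup_le_sSup_image (by simpa using hI')

lemma exists_maximal_not_sInf_image_le (h : IsCanonicalExtension e) {S₀ I : Set L}
    (hS₀ : ¬ sInf (e '' S₀) ≤ sSup (e '' I)) :
    ∃ A, S₀ ⊆ A ∧ Maximal (fun A => ¬ sInf (e '' A) ≤ sSup (e '' I)) A := by
  refine zorn_subset_nonempty _ (fun c hcP hc hne => ⟨⋃₀ c, fun hle => ?_,
    fun A hA => Set.subset_sUnion_of_mem hA⟩) S₀ hS₀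
  obtain ⟨S', I', hS', hI', hSI⟩ := h.sInf_image_le_sSup_image_iff.mp hle
  obtain ⟨A, hA, hS'A⟩ :=
    hc.directedOn.exists_mem_subset_of_finite_of_subset_sUnion hne S'.finite_toSet hS'
  exact hcP hA (h.sInf_image_le_sSup_image_iff.mpr ⟨S', I', hS'A, hI', hSI⟩)

lemma completelyJoinIrreducible_sInf_image_of_maximal (h : IsCanonicalExtension e)
    {A I : Set L} (hA : Maximal (fun A => ¬ sInf (e '' A) ≤ sSup (e '' I)) A) :
    CompletelyJoinIrreducible (sInf (e '' A)) := by
  intro S hS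
  by_contra hAS
  refine hA.1 (hS ▸ sSup_le fun s hs => h.le_of_forall_sInf_image_le fun B hBs => ?_)
  have hsA : s ≤ sInf (e '' A) := (le_sSup hs).trans_eq hS.symm
  by_contra hB
  -- a closed element below `s` but off the open element would enlarge the maximal `A`
  have hAB : A ∪ B ⊆ A := hA.2 (show ¬ sInf (e '' (A ∪ B)) ≤ sSup (e '' I) by
    rwa [Set.image_union, sInf_union, inf_eq_right.2 (hBs.trans hsA)]) Set.subset_union_left
  have hAs : sInf (e '' A) ≤ s :=
    (sInf_le_sInf (Set.image_mono (Set.subset_union_right.trans hAB))).trans hBs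
  exact hAS (le_antisymm hsA hAs ▸ hs)

theorem le_of_forall_completelyJoinIrreducible (h : IsCanonicalExtension e) {u v : C}
    (huv : ∀ x, CompletelyJoinIrreducible x → x ≤ u → x ≤ v) : u ≤ v := by
  by_contra huv'
  obtain ⟨S₀, hS₀u, hS₀v⟩ : ∃ S₀ : Set L, sInf (e '' S₀) ≤ u ∧ ¬ sInf (e '' S₀) ≤ v := by
    by_contra! H
    exact huv' (h.le_of_forall_sInf_image_le H)
  obtain ⟨I, hvI, hS₀I⟩ : ∃ I : Set L, v ≤ sSup (e '' I) ∧ ¬ sInf (e '' S₀) ≤ sSup (e '' I) := by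
    by_contra! H
    exact hS₀v (h.le_of_forall_le_sSup_image H)
  obtain ⟨A, hS₀A, hA⟩ := h.exists_maximal_not_sInf_image_le hS₀I
  have hAu : sInf (e '' A) ≤ u := (sInf_le_sInf (Set.image_mono hS₀A)).trans hS₀u
  exact hA.1 ((huv _ (h.completelyJoinIrreducible_sInf_image_of_maximal hA) hAu).trans hvI)

lemma le_finset_sup_inf_of_hatSet_subset (h : IsCanonicalExtension e) {T : Finset L} {b : L}
    (hb : hatSet e b ⊆ ⋃ a ∈ T, hatSet e a) {c : L} (hc : c ≤ b) : c ≤ T.sup (c ⊓ ·) := by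
  rw [← h.map_le_map_iff]
  refine h.le_of_forall_completelyJoinIrreducible fun x hx hxc => ?_
  obtain ⟨a, haT, -, hxa⟩ := Set.mem_iUnion₂.mp (hb ⟨hx, hxc.trans (h.monotone hc)⟩)
  calc x ≤ e (c ⊓ a) := by rw [h.2.1]; exact le_inf hxc hxa
    _ ≤ e (T.sup (c ⊓ ·)) := h.monotone (Finset.le_sup (f := (c ⊓ ·)) haT)

end IsCanonicalExtension

section AIdeal

variable {L : Type*} [Lattice L] [BoundedOrder L]

lemma joinAdmissible_singleton (a : L) : JoinAdmissible {a} := fun _ => by simp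

lemma JoinAdmissible.le_sup_inf {M : Finset L} (hM : JoinAdmissible M) {c : L}
    (hc : c ≤ M.sup id) : c ≤ M.sup (c ⊓ ·) :=
  ((inf_eq_left.2 hc).symm.trans (hM c)).le

lemma joinAdmissible_image_inf [DecidableEq L] {T : Finset L} {b : L}
    (hT : ∀ c ≤ b, c ≤ T.sup (c ⊓ ·)) :
    JoinAdmissible (T.image (b ⊓ ·)) ∧ (T.image (b ⊓ ·)).sup id = b := by
  have hsup : (T.image (b ⊓ ·)).sup id = b := by
    rw [Finset.sup_image]
    exact le_antisymm (Finset.sup_le fun _ _ => inf_le_left) (hT b le_rfl)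
  refine ⟨fun c => ?_, hsup⟩
  rw [hsup, Finset.sup_image]
  refine le_antisymm ((hT _ inf_le_right).trans (Finset.sup_mono_fun fun a _ => ?_)) ?_
  · exact inf_assoc c b a |>.le
  · exact Finset.sup_le fun a _ => inf_le_inf_left c inf_le_left

lemma JoinAdmissible.biUnion [DecidableEq L] {N : Finset L} (hN : JoinAdmissible N)
    {M : L → Finset L} (hM : ∀ n ∈ N, JoinAdmissible (M n))
    (hMN : ∀ n ∈ N, (M n).sup id = n) :
    JoinAdmissible (N.biUnion M) ∧ (N.biUnion M).sup id = N.sup id := by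
  have hsup : (N.biUnion M).sup id = N.sup id := by
    rw [Finset.sup_biUnion]
    exact Finset.sup_congr rfl hMN
  refine ⟨fun a => ?_, hsup⟩
  rw [hsup, hN, Finset.sup_biUnion]
  refine Finset.sup_congr rfl fun n hn => ?_
  conv_lhs => rw [← hMN n hn]
  exact hM n hn a

lemma isAIdeal_setOf_joinAdmissible (T : Set L) :
    IsAIdeal {c : L | ∃ M : Finset L,
      JoinAdmissible M ∧ (∀ m ∈ M, ∃ a ∈ T, m ≤ a) ∧ c = M.sup id} := by
  classical
  constructor
  · rintro _ ⟨M, hM, hMT, rfl⟩ b hb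
    obtain ⟨hadm, hsup⟩ := joinAdmissible_image_inf fun c hc => hM.le_sup_inf (hc.trans hb)
    refine ⟨_, hadm, fun m hm => ?_, hsup.symm⟩
    obtain ⟨n, hn, rfl⟩ := Finset.mem_image.mp hm
    obtain ⟨a, haT, hna⟩ := hMT n hn
    exact ⟨a, haT, inf_le_right.trans hna⟩
  · intro N hNA hN
    choose! M hM hMT hMN using fun n (hn : n ∈ N) => hNA hn
    obtain ⟨hadm, hsup⟩ := hN.biUnion hM fun n hn => (hMN n hn).symm
    refine ⟨_, hadm, fun m hm => ?_, hsup.symm⟩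
    obtain ⟨n, hn, hmn⟩ := Finset.mem_biUnion.mp hm
    exact hMT n hn m hmn

theorem mem_aIdealGen_iff {T : Set L} {b : L} :
    b ∈ aIdealGen T ↔
      ∃ M : Finset L, JoinAdmissible M ∧ (∀ m ∈ M, ∃ a ∈ T, m ≤ a) ∧ b = M.sup id := by
  refine ⟨fun hb => Set.mem_sInter.mp hb _ ⟨isAIdeal_setOf_joinAdmissible T, fun a ha =>
    ⟨{a}, joinAdmissible_singleton a, fun m hm => ⟨a, ha, (Finset.mem_singleton.mp hm).le⟩,
      by simp⟩⟩, ?_⟩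
  rintro ⟨M, hM, hMT, rfl⟩
  refine Set.mem_sInter.mpr fun A ⟨⟨hdown, hjoin⟩, hTA⟩ => hjoin M (fun m hm => ?_) hM
  obtain ⟨a, haT, hma⟩ := hMT m hm
  exact hdown a (hTA haT) m hma

end AIdeal

/-- Characterization of membership in the a-ideal generated by a finite set `T`:
`b ∈ ⟨T⟩_ai` iff `b̂ ⊆ ⋃_{a ∈ T} â` iff `b` is the join of a finite join-admissible
set of elements below elements of `T`. -/
theorem mem_aIdealGen_tfae {L C : Type*} [Lattice L] [BoundedOrder L]
    [CompleteLattice C] (e : L → C) (h : IsCanonicalExtension e)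
    (T : Finset L) (b : L) :
    (b ∈ aIdealGen (T : Set L) ↔ hatSet e b ⊆ ⋃ a ∈ T, hatSet e a) ∧
    (b ∈ aIdealGen (T : Set L) ↔
      ∃ M : Finset L, JoinAdmissible M ∧ (∀ m ∈ M, ∃ a ∈ T, m ≤ a) ∧ b = M.sup id) := by
  classical
  refine ⟨mem_aIdealGen_iff.trans ⟨?_, fun hb => ?_⟩, mem_aIdealGen_iff⟩
  · rintro ⟨M, hM, hMT, rfl⟩ x ⟨hx, hxM⟩
    obtain ⟨m, hm, hxm⟩ := h.exists_le_of_le_map_sup hM hx hxM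
    obtain ⟨a, haT, hma⟩ := hMT m hm
    exact Set.mem_biUnion haT ⟨hx, hxm.trans (h.monotone hma)⟩
  · obtain ⟨hadm, hsup⟩ :=
      joinAdmissible_image_inf fun c hc => h.le_finset_sup_inf_of_hatSet_subset hb hc
    refine ⟨_, hadm, fun m hm => ?_, hsup.symm⟩
    obtain ⟨a, haT, rfl⟩ := Finset.mem_image.mp hm
    exact ⟨a, haT, inf_le_right⟩
end

section
/- The set of finitely generated a-ideals of a bounded lattice L, ordered by inclusion, is a bounded distributive lattice: its least element is ⟨∅⟩_ai and greatest element is L, the meet of two finitely generated a-ideals is their intersection, and their join is the a-ideal generated by their union (which is again finitely generated). -/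
/-- `A` is a finitely generated a-ideal of `L`. -/
def IsFGAIdeal {L : Type*} [Lattice L] [BoundedOrder L] (A : Set L) : Prop :=
  ∃ T : Finset L, A = aIdealGen (T : Set L)

section Aux

variable {L : Type*} [Lattice L] [BoundedOrder L]

lemma isAIdeal_aIdealGen (T : Set L) : IsAIdeal (aIdealGen T) := by
  constructor
  · intro a ha b hb A hA
    exact hA.1.1 a (ha A hA) b hb
  · intro M hM hadm A hA
    exact hA.1.2 M (fun m hm => hM hm A hA) hadm

lemma subset_aIdealGen (T : Set L) : T ⊆ aIdealGen T :=
  fun _ hx _ hA => hA.2 hx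

lemma aIdealGen_subset {T A : Set L} (hA : IsAIdeal A) (h : T ⊆ A) :
    aIdealGen T ⊆ A := Set.sInter_subset_of_mem ⟨hA, h⟩

lemma aIdealGen_mono {S T : Set L} (h : S ⊆ T) : aIdealGen S ⊆ aIdealGen T :=
  aIdealGen_subset (isAIdeal_aIdealGen T) (h.trans (subset_aIdealGen T))

lemma isAIdeal_inter {A B : Set L} (hA : IsAIdeal A) (hB : IsAIdeal B) :
    IsAIdeal (A ∩ B) := by
  constructor
  · intro a ha b hb
    exact ⟨hA.1 a ha.1 b hb, hB.1 a ha.2 b hb⟩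
  · intro M hM hadm
    exact ⟨hA.2 M (fun m hm => (hM hm).1) hadm, hB.2 M (fun m hm => (hM hm).2) hadm⟩

lemma inf_sup_mem {U : Set L} (hU : IsAIdeal U) (c : L) (M : Finset L)
    (hadm : JoinAdmissible M) (h : ∀ m ∈ M, c ⊓ m ∈ U) : c ⊓ M.sup id ∈ U := by
  classical
  have hsup : (M.image (fun m => c ⊓ m)).sup id = c ⊓ M.sup id := by
    rw [Finset.sup_image]
    exact (hadm c).symm
  have hadm' : JoinAdmissible (M.image (fun m => c ⊓ m)) := by
    intro a
    rw [hsup, ← inf_assoc, hadm (a ⊓ c), Finset.sup_image]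
    exact Finset.sup_congr rfl (fun m _ => by simp [inf_assoc])
  rw [← hsup]
  refine hU.2 _ ?_ hadm'
  intro x hx
  simp only [Finset.coe_image, Set.mem_image, Finset.mem_coe] at hx
  obtain ⟨m, hm, rfl⟩ := hx
  exact h m hm

/-- Key lemma: if all pairwise meets of generators lie in an a-ideal `U`,
then all pairwise meets of the generated a-ideals lie in `U`. -/
lemma inf_mem_of_forall {S T U : Set L} (hU : IsAIdeal U)
    (h : ∀ s ∈ S, ∀ t ∈ T, s ⊓ t ∈ U) :
    ∀ x ∈ aIdealGen S, ∀ y ∈ aIdealGen T, x ⊓ y ∈ U := by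
  have step1 : ∀ s ∈ S, ∀ y ∈ aIdealGen T, s ⊓ y ∈ U := by
    intro s hs
    have hsub : aIdealGen T ⊆ {y | s ⊓ y ∈ U} := by
      refine aIdealGen_subset ⟨?_, ?_⟩ (fun t ht => h s hs t ht)
      · intro a ha b hb
        exact hU.1 _ ha _ (inf_le_inf_left s hb)
      · intro M hM hadm
        exact inf_sup_mem hU s M hadm (fun m hm => hM hm)
    exact fun y hy => hsub hy
  intro x hx y hy
  have hsub : aIdealGen S ⊆ {x | x ⊓ y ∈ U} := by
    refine aIdealGen_subset ⟨?_, ?_⟩ (fun s hs => step1 s hs y hy)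
    · intro a ha b hb
      exact hU.1 _ ha _ (inf_le_inf_right y hb)
    · intro M hM hadm
      show M.sup id ⊓ y ∈ U
      rw [inf_comm]
      exact inf_sup_mem hU y M hadm (fun m hm => by rw [inf_comm]; exact hM hm)
  exact hsub hx

lemma IsFGAIdeal.isAIdeal {A : Set L} (hA : IsFGAIdeal A) : IsAIdeal A := by
  obtain ⟨T, rfl⟩ := hA
  exact isAIdeal_aIdealGen _

end Aux

/-- The finitely generated a-ideals of a bounded lattice `L`, ordered by inclusion, form
a bounded distributive lattice: least element `⟨∅⟩_ai`, greatest element `L`, meet given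
by intersection, join given by the a-ideal generated by the union (which is again
finitely generated). -/
theorem fgAIdeals_boundedDistribLattice (L : Type*) [Lattice L] [BoundedOrder L] :
    -- least element
    (IsFGAIdeal (aIdealGen (∅ : Set L)) ∧
      ∀ A : Set L, IsFGAIdeal A → aIdealGen (∅ : Set L) ⊆ A) ∧
    -- greatest element
    (IsFGAIdeal (Set.univ : Set L) ∧
      ∀ A : Set L, IsFGAIdeal A → A ⊆ Set.univ) ∧
    -- meet is intersection
    (∀ A B : Set L, IsFGAIdeal A → IsFGAIdeal B → IsFGAIdeal (A ∩ B)) ∧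
    -- join is the a-ideal generated by the union, again finitely generated,
    -- and it is the least upper bound
    (∀ A B : Set L, IsFGAIdeal A → IsFGAIdeal B →
      IsFGAIdeal (aIdealGen (A ∪ B)) ∧
      A ⊆ aIdealGen (A ∪ B) ∧ B ⊆ aIdealGen (A ∪ B) ∧
      ∀ C : Set L, IsFGAIdeal C → A ⊆ C → B ⊆ C → aIdealGen (A ∪ B) ⊆ C) ∧
    -- distributivity
    (∀ A B C : Set L, IsFGAIdeal A → IsFGAIdeal B → IsFGAIdeal C →
      A ∩ aIdealGen (B ∪ C) = aIdealGen ((A ∩ B) ∪ (A ∩ C))) := by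
  refine ⟨⟨⟨∅, by simp⟩, ?_⟩, ⟨⟨{⊤}, ?_⟩, fun A _ => Set.subset_univ A⟩, ?_, ?_, ?_⟩
  · -- least
    intro A hA
    exact aIdealGen_subset hA.isAIdeal (Set.empty_subset A)
  · -- univ is FG, generated by {⊤}
    apply Set.eq_of_subset_of_subset _ (Set.subset_univ _)
    intro x _
    have htop : (⊤ : L) ∈ aIdealGen ((({⊤} : Finset L) : Set L)) :=
      subset_aIdealGen _ (by simp)
    exact (isAIdeal_aIdealGen _).1 ⊤ htop x le_top
  · -- meet
    intro A B hA hB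
    classical
    obtain ⟨S, rfl⟩ := hA
    obtain ⟨T, rfl⟩ := hB
    refine ⟨(S ×ˢ T).image (fun p => p.1 ⊓ p.2), ?_⟩
    apply Set.eq_of_subset_of_subset
    · intro x hx
      have := inf_mem_of_forall (S := (S : Set L)) (T := (T : Set L))
        (isAIdeal_aIdealGen (((S ×ˢ T).image (fun p => p.1 ⊓ p.2) : Finset L) : Set L))
        (fun s hs t ht => subset_aIdealGen _ (by
          simp only [Finset.coe_image, Set.mem_image, Finset.mem_coe, Finset.mem_product]
          exact ⟨(s, t), ⟨hs, ht⟩, rfl⟩)) x hx.1 x hx.2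
      simpa using this
    · apply aIdealGen_subset
      · exact isAIdeal_inter (isAIdeal_aIdealGen _) (isAIdeal_aIdealGen _)
      · intro x hx
        simp only [Finset.coe_image, Set.mem_image, Finset.mem_coe, Finset.mem_product] at hx
        obtain ⟨⟨s, t⟩, ⟨hs, ht⟩, rfl⟩ := hx
        exact ⟨(isAIdeal_aIdealGen _).1 s (subset_aIdealGen _ hs) _ inf_le_left,
               (isAIdeal_aIdealGen _).1 t (subset_aIdealGen _ ht) _ inf_le_right⟩
  · -- join
    intro A B hA hB
    refine ⟨?_, (Set.subset_union_left).trans (subset_aIdealGen _),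
      (Set.subset_union_right).trans (subset_aIdealGen _), ?_⟩
    · classical
      obtain ⟨S, rfl⟩ := hA
      obtain ⟨T, rfl⟩ := hB
      refine ⟨S ∪ T, ?_⟩
      apply Set.eq_of_subset_of_subset
      · apply aIdealGen_subset (isAIdeal_aIdealGen _)
        apply Set.union_subset
        · exact aIdealGen_mono (by simp only [Finset.coe_union]; exact Set.subset_union_left)
        · exact aIdealGen_mono (by simp only [Finset.coe_union]; exact Set.subset_union_right)
      · apply aIdealGen_mono
        rw [Finset.coe_union]
        exact Set.union_subset ((subset_aIdealGen _).trans Set.subset_union_left)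
          ((subset_aIdealGen _).trans Set.subset_union_right)
    · intro C hC h1 h2
      exact aIdealGen_subset hC.isAIdeal (Set.union_subset h1 h2)
  · -- distributivity
    intro A B C hA hB hC
    apply Set.eq_of_subset_of_subset
    · intro x hx
      have hgens : ∀ a ∈ A, ∀ y ∈ B ∪ C, a ⊓ y ∈ aIdealGen ((A ∩ B) ∪ (A ∩ C)) := by
        intro a ha y hy
        have haA : a ⊓ y ∈ A := hA.isAIdeal.1 a ha _ inf_le_left
        cases hy with
        | inl hyB =>
          exact subset_aIdealGen _ (Or.inl ⟨haA, hB.isAIdeal.1 y hyB _ inf_le_right⟩)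
        | inr hyC =>
          exact subset_aIdealGen _ (Or.inr ⟨haA, hC.isAIdeal.1 y hyC _ inf_le_right⟩)
      have := inf_mem_of_forall (isAIdeal_aIdealGen ((A ∩ B) ∪ (A ∩ C))) hgens x
        (subset_aIdealGen A hx.1) x hx.2
      simpa using this
    · apply aIdealGen_subset
      · exact isAIdeal_inter hA.isAIdeal (isAIdeal_aIdealGen _)
      · apply Set.union_subset
        · exact Set.subset_inter Set.inter_subset_left
            ((Set.inter_subset_right).trans ((Set.subset_union_left).trans (subset_aIdealGen _)))
        · exact Set.subset_inter Set.inter_subset_left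
            ((Set.inter_subset_right).trans ((Set.subset_union_right).trans (subset_aIdealGen _)))
end
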